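/- arXiv:1503.06438 — 10 statements merged into one kernel-verified Lean document; each statement's English description precedes it below -/
import Mathlib

section
/- Let G = (V,E) be a finite simple graph, let C ⊆ V be a vertex cover of G, and let S ⊆ V be a minimal vertex cover of G. Then S ∖ C = {v ∈ V ∖ C : N(v) ⊄ S ∩ C}, i.e., S = (S ∩ C) ∪ {v ∈ V ∖ C : some neighbor of v is not in S ∩ C}. In particular, any two minimal vertex covers S, S' of G with S ∩ C = S' ∩ C are equal, so a minimal vertex cover is uniquely determined by its intersection with any fixed vertex cover of G. -/
/-- `S` is a vertex cover of `G`: it contains at least one endpoint of every edge. -/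
def IsVertexCover {V : Type*} (G : SimpleGraph V) (S : Finset V) : Prop :=
  ∀ ⦃u v : V⦄, G.Adj u v → u ∈ S ∨ v ∈ S

/-- `S` is a minimal vertex cover of `G`. -/
def IsMinimalVertexCover {V : Type*} (G : SimpleGraph V) (S : Finset V) : Prop :=
  IsVertexCover G S ∧ ∀ T : Finset V, T ⊂ S → ¬ IsVertexCover G T

lemma key {V : Type*} [Fintype V] [DecidableEq V] (G : SimpleGraph V)
    (C S : Finset V) (hC : IsVertexCover G C) (hS : IsMinimalVertexCover G S) :
    ∀ v : V, v ∈ S \ C ↔ (v ∉ C ∧ ∃ u, G.Adj v u ∧ u ∉ S ∩ C) := by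
  intro v
  simp only [Finset.mem_sdiff, Finset.mem_inter]
  constructor
  · rintro ⟨hvS, hvC⟩
    refine ⟨hvC, ?_⟩
    have hsub : S.erase v ⊂ S := Finset.erase_ssubset hvS
    have hnc := hS.2 _ hsub
    simp only [IsVertexCover, not_forall] at hnc
    obtain ⟨a, b, hab, hn⟩ := hnc
    push_neg at hn
    obtain ⟨ha, hb⟩ := hn
    rcases hS.1 hab with h | h
    · have hav : a = v := by
        by_contra hne
        exact ha (Finset.mem_erase.mpr ⟨hne, h⟩)
      refine ⟨b, hav ▸ hab, fun hb' => ?_⟩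
      have hbv : b = v := by
        by_contra hne
        exact hb (Finset.mem_erase.mpr ⟨hne, hb'.1⟩)
      exact G.ne_of_adj hab (hav.trans hbv.symm)
    · have hbv : b = v := by
        by_contra hne
        exact hb (Finset.mem_erase.mpr ⟨hne, h⟩)
      refine ⟨a, hbv ▸ hab.symm, fun ha' => ?_⟩
      have hav : a = v := by
        by_contra hne
        exact ha (Finset.mem_erase.mpr ⟨hne, ha'.1⟩)
      exact G.ne_of_adj hab (hav.trans hbv.symm)
  · rintro ⟨hvC, u, hadj, hu⟩
    refine ⟨?_, hvC⟩
    have huC : u ∈ C := (hC hadj).resolve_left hvC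
    have huS : u ∉ S := fun h => hu ⟨h, huC⟩
    exact (hS.1 hadj).resolve_right huS

/-- If `C` is a vertex cover and `S` a minimal vertex cover, then
`S \ C = {v ∉ C : some neighbor of v is not in S ∩ C}`; in particular a minimal
vertex cover is uniquely determined by its intersection with `C`. -/
theorem stmt3 {V : Type*} [Fintype V] [DecidableEq V] (G : SimpleGraph V)
    (C S : Finset V) (hC : IsVertexCover G C) (hS : IsMinimalVertexCover G S) :
    (∀ v : V, v ∈ S \ C ↔ (v ∉ C ∧ ∃ u, G.Adj v u ∧ u ∉ S ∩ C)) ∧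
    (∀ S' : Finset V, IsMinimalVertexCover G S' → S ∩ C = S' ∩ C → S = S') := by
  refine ⟨key G C S hC hS, ?_⟩
  intro S' hS' hint
  have h1 := key G C S hC hS
  have h2 := key G C S' hC hS'
  have hdiff : S \ C = S' \ C := by
    ext v
    rw [h1 v, h2 v, hint]
  ext v
  by_cases hv : v ∈ C
  · constructor <;> intro h
    · have hm : v ∈ S' ∩ C := hint ▸ Finset.mem_inter.mpr ⟨h, hv⟩
      exact (Finset.mem_inter.mp hm).1
    · have hm : v ∈ S ∩ C := hint ▸ Finset.mem_inter.mpr ⟨h, hv⟩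
      exact (Finset.mem_inter.mp hm).1
  · constructor <;> intro h
    · have hm : v ∈ S' \ C := hdiff ▸ Finset.mem_sdiff.mpr ⟨h, hv⟩
      exact (Finset.mem_sdiff.mp hm).1
    · have hm : v ∈ S \ C := hdiff ▸ Finset.mem_sdiff.mpr ⟨h, hv⟩
      exact (Finset.mem_sdiff.mp hm).1
end

section
/- Let G = (V,E) be a finite simple graph, let U ⊆ V be a vertex cover of G, and let A' ⊆ U be a set such that (i) every edge of G with both endpoints in U has at least one endpoint in A', and (ii) every vertex v ∈ A' has a neighbor in U ∖ A'. Define Ã = A' ∪ (⋃_{v ∈ U∖A'} (N(v) ∖ U)). Then Ã is a minimal vertex cover of G and à ∩ U = A'. -/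
/-- If `U` is a vertex cover, `A' ⊆ U` covers all edges inside `U`, and every
vertex of `A'` has a neighbor in `U \ A'`, then
`Ã = A' ∪ (⋃_{v ∈ U \ A'} (N(v) \ U))` is a minimal vertex cover with `Ã ∩ U = A'`. -/
theorem stmt4 {V : Type*} [Fintype V] [DecidableEq V] (G : SimpleGraph V)
    [DecidableRel G.Adj] (U A' : Finset V)
    (hU : IsVertexCover G U) (hA'U : A' ⊆ U)
    (hcov : ∀ ⦃u v : V⦄, G.Adj u v → u ∈ U → v ∈ U → u ∈ A' ∨ v ∈ A')
    (hnbr : ∀ v ∈ A', ∃ u ∈ U \ A', G.Adj v u)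
    (Atil : Finset V)
    (hAtil : Atil = A' ∪ (U \ A').biUnion (fun v => G.neighborFinset v \ U)) :
    IsMinimalVertexCover G Atil ∧ Atil ∩ U = A' := by
  subst hAtil
  set B := (U \ A').biUnion (fun v => G.neighborFinset v \ U) with hB
  have hmemA : ∀ x ∈ A' ∪ B, x ∈ U → x ∈ A' := by
    intro x hx hxU
    rcases Finset.mem_union.1 hx with h | h
    · exact h
    · rcases Finset.mem_biUnion.1 h with ⟨v, _, hv⟩
      exact absurd hxU (Finset.mem_sdiff.1 hv).2
  have hinter : (A' ∪ B) ∩ U = A' := by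
    apply Finset.Subset.antisymm
    · intro x hx
      rcases Finset.mem_inter.1 hx with ⟨h1, h2⟩
      exact hmemA x h1 h2
    · intro x hx
      exact Finset.mem_inter.2 ⟨Finset.mem_union_left _ hx, hA'U hx⟩
  have hcover : IsVertexCover G (A' ∪ B) := by
    intro u v huv
    rcases hU huv with hu | hv
    · by_cases hvU : v ∈ U
      · rcases hcov huv hu hvU with h | h
        · exact Or.inl (Finset.mem_union_left _ h)
        · exact Or.inr (Finset.mem_union_left _ h)
      · by_cases huA : u ∈ A'
        · exact Or.inl (Finset.mem_union_left _ huA)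
        · refine Or.inr (Finset.mem_union_right _ ?_)
          exact Finset.mem_biUnion.2 ⟨u, Finset.mem_sdiff.2 ⟨hu, huA⟩,
            Finset.mem_sdiff.2 ⟨(G.mem_neighborFinset u v).2 huv, hvU⟩⟩
    · by_cases huU : u ∈ U
      · rcases hcov huv huU hv with h | h
        · exact Or.inl (Finset.mem_union_left _ h)
        · exact Or.inr (Finset.mem_union_left _ h)
      · by_cases hvA : v ∈ A'
        · exact Or.inr (Finset.mem_union_left _ hvA)
        · refine Or.inl (Finset.mem_union_right _ ?_)
          exact Finset.mem_biUnion.2 ⟨v, Finset.mem_sdiff.2 ⟨hv, hvA⟩,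
            Finset.mem_sdiff.2 ⟨(G.mem_neighborFinset v u).2 huv.symm, huU⟩⟩
  refine ⟨⟨hcover, ?_⟩, hinter⟩
  intro T hT hTcov
  obtain ⟨x, hxA, hxT⟩ := Finset.exists_of_ssubset hT
  rcases Finset.mem_union.1 hxA with hxA' | hxB
  · obtain ⟨u, hu, hadj⟩ := hnbr x hxA'
    have huU := Finset.mem_sdiff.1 hu
    have huT : u ∉ T := by
      intro h
      exact huU.2 (hmemA u (hT.subset h) huU.1)
    rcases hTcov hadj with h | h
    · exact hxT h
    · exact huT h
  · rcases Finset.mem_biUnion.1 hxB with ⟨v, hv, hx⟩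
    have hvU := Finset.mem_sdiff.1 hv
    have hvT : v ∉ T := by
      intro h
      exact hvU.2 (hmemA v (hT.subset h) hvU.1)
    have hadj : G.Adj v x := (G.mem_neighborFinset v x).1 (Finset.mem_sdiff.1 hx).1
    rcases hTcov hadj with h | h
    · exact hvT h
    · exact hxT h
end

section
/- Let V be a finite set, let M ≥ 1 be a real number, and let w : V → ℝ satisfy 1 ≤ w(v) ≤ M for all v ∈ V. Let U, Ã, S* ⊆ V be sets such that S* ∖ U ⊆ Ã ∖ U and 2·|Ã ∩ U| ≥ |U|. Then max{w(U), w(Ã)} ≥ w(S*) / (2 − 1/(M+1)). In words: if the weight of every vertex lies in [1, M], the part of S* outside U is contained in the part of à outside U, and à contains at least half of the elements of U, then the heavier of U and à has weight at least a fraction 1/(2 − 1/(M+1)) of the weight of S*. -/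
/-- If all weights lie in `[1, M]`, `S* \ U ⊆ Ã \ U`, and `Ã` contains at least
half of the elements of `U`, then `max {w(U), w(Ã)} ≥ w(S*) / (2 - 1/(M+1))`. -/
theorem stmt6 {V : Type*} [Fintype V] [DecidableEq V] (M : ℝ) (hM : 1 ≤ M)
    (w : V → ℝ) (hw : ∀ v : V, 1 ≤ w v ∧ w v ≤ M)
    (U Atil Sstar : Finset V)
    (hsub : Sstar \ U ⊆ Atil \ U)
    (hcard : 2 * (Atil ∩ U).card ≥ U.card) :
    max (∑ v ∈ U, w v) (∑ v ∈ Atil, w v) ≥ (∑ v ∈ Sstar, w v) / (2 - 1 / (M + 1)) := by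
  have hnn : ∀ v : V, 0 ≤ w v := fun v => le_trans zero_le_one (hw v).1
  set x := max (∑ v ∈ U, w v) (∑ v ∈ Atil, w v) with hx
  have hux : (∑ v ∈ U, w v) ≤ x := le_max_left _ _
  have hax : (∑ v ∈ Atil, w v) ≤ x := le_max_right _ _
  set a := ∑ v ∈ Atil \ U, w v with ha
  set b := ∑ v ∈ Atil ∩ U, w v with hb
  set u := ∑ v ∈ U, w v with hu
  set wS := ∑ v ∈ Sstar, w v with hwS
  set m : ℝ := ((Atil ∩ U).card : ℝ) with hm
  set t : ℝ := ((U \ Atil).card : ℝ) with ht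
  have hUdec : ∑ v ∈ U ∩ Atil, w v + ∑ v ∈ U \ Atil, w v = u :=
    Finset.sum_inter_add_sum_sdiff U Atil w
  rw [Finset.inter_comm U Atil] at hUdec
  have hAdec : b + a = ∑ v ∈ Atil, w v :=
    Finset.sum_inter_add_sum_sdiff Atil U w
  have hSdec : ∑ v ∈ Sstar ∩ U, w v + ∑ v ∈ Sstar \ U, w v = wS :=
    Finset.sum_inter_add_sum_sdiff Sstar U w
  have hcards : m + t = (U.card : ℝ) := by
    have := Finset.card_inter_add_card_sdiff U Atil
    rw [Finset.inter_comm U Atil] at this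
    rw [hm, ht]; exact_mod_cast this
  -- weight bounds
  have hdiffle : ∑ v ∈ U \ Atil, w v ≤ M * t := by
    have := Finset.sum_le_card_nsmul (U \ Atil) w M (fun v _ => (hw v).2)
    rw [nsmul_eq_mul] at this
    linarith [this]
  have hbge : m ≤ b := by
    have := Finset.card_nsmul_le_sum (Atil ∩ U) w 1 (fun v _ => (hw v).1)
    rw [nsmul_eq_mul, mul_one] at this
    exact this
  have htm : t ≤ m := by
    have h2m : (U.card : ℝ) ≤ 2 * m := by rw [hm]; exact_mod_cast hcard
    linarith
  -- subset sums
  have hS1 : ∑ v ∈ Sstar ∩ U, w v ≤ u :=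
    Finset.sum_le_sum_of_subset_of_nonneg (Finset.inter_subset_right)
      (fun v _ _ => hnn v)
  have hS2 : ∑ v ∈ Sstar \ U, w v ≤ a :=
    Finset.sum_le_sum_of_subset_of_nonneg hsub (fun v _ _ => hnn v)
  have hA : wS ≤ a + u := by linarith
  have h1 : a + u ≤ x + M * t := by linarith
  have h2 : a + u ≤ 2 * x - t := by linarith
  have hMnn : (0 : ℝ) ≤ M := by linarith
  have hA' : M * wS ≤ M * (a + u) := mul_le_mul_of_nonneg_left hA hMnn
  have h2' : M * (a + u) ≤ M * (2 * x - t) := mul_le_mul_of_nonneg_left h2 hMnn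
  have key : (M + 1) * wS ≤ (2 * M + 1) * x := by nlinarith [hA', h2', hA, h1]
  have hM1 : (0 : ℝ) < M + 1 := by linarith
  have hinv : 1 / (M + 1) ≤ 1 := by
    rw [div_le_one hM1]; linarith
  have hc : (0 : ℝ) < 2 - 1 / (M + 1) := by linarith
  rw [ge_iff_le, div_le_iff₀ hc]
  rw [show x * (2 - 1 / (M + 1)) = ((2 * M + 1) * x) / (M + 1) by field_simp; ring]
  rw [le_div_iff₀ hM1]
  linarith [key]
end

section
/- In the hitting-set graph G constructed from an instance (U, F_1, …, F_m) with |U| = n, if every set F_i is nonempty, then R = R_1 ∪ R_2 is a minimal vertex cover of G of size n + m(n+1). -/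
/-- Vertices of the hitting-set graph built from an instance with ground set
`Fin n` and sets `F_1, …, F_m`:  `l c u` (for `c ∈ Fin 2`) are the vertices
`l^1_u, l^2_u`, `r1 u` is `r_u`, and `r2 c i` (for `c ∈ Fin (n+1)`) is `r^c_i`. -/
inductive HV (n m : ℕ) : Type where
  | l : Fin 2 → Fin n → HV n m
  | r1 : Fin n → HV n m
  | r2 : Fin (n + 1) → Fin m → HV n m

/-- The base relation inducing the edges of the hitting-set graph:
`{l^c_u, r_u}` for all `u, c`, and `{l^1_u, r^c_i}` whenever `u ∈ F i`. -/
def hsRel {n m : ℕ} (F : Fin m → Finset (Fin n)) : HV n m → HV n m → Prop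
  | .l _ u, .r1 u' => u = u'
  | .l c u, .r2 _ i => c = 0 ∧ u ∈ F i
  | _, _ => False

/-- The hitting-set graph of the instance `F`. -/
def hsGraph {n m : ℕ} (F : Fin m → Finset (Fin n)) : SimpleGraph (HV n m) :=
  SimpleGraph.fromRel (hsRel F)

/-- The left side `L = {l^c_u}`. -/
def Lset (n m : ℕ) : Set (HV n m) := {x | ∃ c u, x = HV.l c u}

/-- `R_1 = {r_u}`. -/
def R1set (n m : ℕ) : Set (HV n m) := {x | ∃ u, x = HV.r1 u}

/-- `R_2 = {r^c_i}`. -/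
def R2set (n m : ℕ) : Set (HV n m) := {x | ∃ c i, x = HV.r2 c i}

/-- `S` is a vertex cover of `G`: it contains at least one endpoint of every edge. -/
def IsVC {α : Type*} (G : SimpleGraph α) (S : Set α) : Prop :=
  ∀ ⦃u v : α⦄, G.Adj u v → u ∈ S ∨ v ∈ S

/-- `S` is a minimal vertex cover of `G`. -/
def IsMinVC {α : Type*} (G : SimpleGraph α) (S : Set α) : Prop :=
  IsVC G S ∧ ∀ T : Set α, T ⊂ S → ¬ IsVC G T

/-!
Every edge of the hitting-set graph has exactly one endpoint in `R`, so `R` is a vertex cover.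
It is minimal because every vertex of `R` has a neighbour `l^1_u` outside `R`: for `r_u` this is
the edge `{l^1_u, r_u}`, and for `r^c_i` it is `{l^1_u, r^c_i}` with `u ∈ F_i`, which exists since
`F_i` is nonempty.
-/

theorem IsMinVC.of_forall_exists_adj_notMem {α : Type*} {G : SimpleGraph α} {S : Set α}
    (hS : IsVC G S) (hcrit : ∀ v ∈ S, ∃ w ∉ S, G.Adj w v) : IsMinVC G S := by
  refine ⟨hS, fun T ⟨hTS, hST⟩ hT => ?_⟩
  obtain ⟨v, hvS, hvT⟩ := Set.not_subset.mp hST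
  obtain ⟨w, hwS, hwv⟩ := hcrit v hvS
  exact (hT hwv).elim (fun hwT => hwS (hTS hwT)) hvT

namespace HV

variable {n m : ℕ}

def rVertex : Fin n ⊕ (Fin (n + 1) × Fin m) → HV n m :=
  Sum.elim r1 fun p => r2 p.1 p.2

theorem rVertex_injective : Function.Injective (rVertex : _ → HV n m) := by
  rintro (u | ⟨c, i⟩) (u' | ⟨c', i'⟩) h <;> cases h <;> rfl

theorem range_rVertex : Set.range (rVertex : _ → HV n m) = R1set n m ∪ R2set n m := by
  ext x
  constructor
  · rintro ⟨u | ⟨c, i⟩, rfl⟩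
    exacts [Or.inl ⟨u, rfl⟩, Or.inr ⟨c, i, rfl⟩]
  · rintro (⟨u, rfl⟩ | ⟨c, i, rfl⟩)
    exacts [⟨.inl u, rfl⟩, ⟨.inr (c, i), rfl⟩]

theorem l_notMem_R (c : Fin 2) (u : Fin n) : l c u ∉ R1set n m ∪ R2set n m := by
  rintro (⟨_, h⟩ | ⟨_, _, h⟩) <;> cases h

end HV

section

open HV

variable {n m : ℕ}

theorem ncard_R1set_union_R2set : (R1set n m ∪ R2set n m).ncard = n + m * (n + 1) := by
  rw [← range_rVertex, Set.ncard_range_of_injective rVertex_injective]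
  simp [mul_comm]

theorem hsRel.right_mem {F : Fin m → Finset (Fin n)} {x y : HV n m} (h : hsRel F x y) :
    y ∈ R1set n m ∪ R2set n m := by
  rcases x with ⟨c, u⟩ | u | ⟨c, i⟩ <;> rcases y with ⟨c', u'⟩ | u' | ⟨c', i'⟩ <;>
    first
    | exact h.elim
    | exact Or.inl ⟨_, rfl⟩
    | exact Or.inr ⟨_, _, rfl⟩

theorem isVC_hsGraph_R (F : Fin m → Finset (Fin n)) :
    IsVC (hsGraph F) (R1set n m ∪ R2set n m) := by
  rintro x y ⟨-, h | h⟩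
  exacts [Or.inr h.right_mem, Or.inl h.right_mem]

theorem hsGraph_adj_l_r1 (F : Fin m → Finset (Fin n)) (c : Fin 2) (u : Fin n) :
    (hsGraph F).Adj (l c u) (r1 u) :=
  ⟨nofun, Or.inl rfl⟩

theorem hsGraph_adj_l_r2 {F : Fin m → Finset (Fin n)} {u : Fin n} {i : Fin m} (hu : u ∈ F i)
    (c : Fin (n + 1)) : (hsGraph F).Adj (l 0 u) (r2 c i) :=
  ⟨nofun, Or.inl ⟨rfl, hu⟩⟩

end

/-- If every `F i` is nonempty, then `R = R_1 ∪ R_2` is a minimal vertex cover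
of the hitting-set graph, of size `n + m(n+1)`. -/
theorem stmt9 {n m : ℕ} (F : Fin m → Finset (Fin n))
    (hF : ∀ i : Fin m, (F i).Nonempty) :
    IsMinVC (hsGraph F) (R1set n m ∪ R2set n m) ∧
    (R1set n m ∪ R2set n m).ncard = n + m * (n + 1) := by
  refine ⟨.of_forall_exists_adj_notMem (isVC_hsGraph_R F) ?_, ncard_R1set_union_R2set⟩
  rintro _ (⟨u, rfl⟩ | ⟨c, i, rfl⟩)
  · exact ⟨.l 0 u, HV.l_notMem_R 0 u, hsGraph_adj_l_r1 F 0 u⟩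
  · obtain ⟨u, hu⟩ := hF i
    exact ⟨.l 0 u, HV.l_notMem_R 0 u, hsGraph_adj_l_r2 hu c⟩
end

section
/- In the hitting-set graph G constructed from an instance (U, F_1, …, F_m) with |U| = n, every minimal vertex cover S of G satisfies |S ∩ {l^1_u, l^2_u, r_u}| ≤ 2 for each u ∈ U; consequently |S ∩ (L ∪ R_1)| ≤ 2n. -/
lemma hs_key {n m : ℕ} (F : Fin m → Finset (Fin n)) (S : Set (HV n m))
    (hS : IsMinVC (hsGraph F) S) (u : Fin n) :
    ¬ (HV.l 0 u ∈ S ∧ HV.l 1 u ∈ S ∧ HV.r1 u ∈ S) := by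
  rintro ⟨h0, h1, hr⟩
  apply hS.2 (S \ {HV.r1 u})
  · exact ⟨Set.diff_subset, fun hsub => (hsub hr).2 rfl⟩
  · intro a b hab
    have hadj := hab
    rw [hsGraph, SimpleGraph.fromRel_adj] at hadj
    obtain ⟨hne, hrel⟩ := hadj
    rcases hS.1 hab with ha | hb
    · by_cases hra : a = HV.r1 u
      · subst hra
        -- b must be l c u
        rcases hrel with h | h
        · cases b <;> simp [hsRel] at h
        · match b, h with
          | HV.l c u', h =>
            cases h
            right
            refine ⟨?_, fun hb => by simp at hb⟩
            fin_cases c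
            · exact h0
            · exact h1
      · exact Or.inl ⟨ha, hra⟩
    · by_cases hrb : b = HV.r1 u
      · subst hrb
        rcases hrel with h | h
        · match a, h with
          | HV.l c u', h =>
            cases h
            left
            refine ⟨?_, fun hb => by simp at hb⟩
            fin_cases c
            · exact h0
            · exact h1
        · cases a <;> simp [hsRel] at h
      · exact Or.inr ⟨hb, hrb⟩

/-- Every minimal vertex cover `S` of the hitting-set graph contains at most two
of the three vertices `l^1_u, l^2_u, r_u` for each `u`; consequently
`|S ∩ (L ∪ R_1)| ≤ 2n`. -/
theorem stmt11 {n m : ℕ} (F : Fin m → Finset (Fin n))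
    (S : Set (HV n m)) (hS : IsMinVC (hsGraph F) S) :
    (∀ u : Fin n,
      (S ∩ {HV.l 0 u, HV.l 1 u, HV.r1 u} : Set (HV n m)).ncard ≤ 2) ∧
    (S ∩ (Lset n m ∪ R1set n m)).ncard ≤ 2 * n := by
  have key : ∀ u : Fin n,
      (S ∩ {HV.l 0 u, HV.l 1 u, HV.r1 u} : Set (HV n m)).ncard ≤ 2 := by
    intro u
    have hk := hs_key F S hS u
    have hpair : ∀ (a b : HV n m),
        (S ∩ {HV.l 0 u, HV.l 1 u, HV.r1 u} : Set (HV n m)) ⊆ {a, b} →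
        (S ∩ {HV.l 0 u, HV.l 1 u, HV.r1 u} : Set (HV n m)).ncard ≤ 2 := by
      intro a b hsub
      calc (S ∩ {HV.l 0 u, HV.l 1 u, HV.r1 u} : Set (HV n m)).ncard
          ≤ ({a, b} : Set (HV n m)).ncard :=
            Set.ncard_le_ncard hsub (((Set.finite_singleton _).insert _))
        _ ≤ 2 := by
            refine le_trans (Set.ncard_insert_le _ _) ?_
            simp
    by_cases hr : HV.r1 u ∈ S
    · by_cases h0 : HV.l 0 u ∈ S
      · have h1 : HV.l 1 u ∉ S := fun h1 => hk ⟨h0, h1, hr⟩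
        refine hpair (HV.l 0 u) (HV.r1 u) ?_
        rintro x ⟨hxS, hx⟩
        rcases hx with h | h | h
        · exact Or.inl h
        · exact absurd (h ▸ hxS) h1
        · exact Or.inr h
      · refine hpair (HV.l 1 u) (HV.r1 u) ?_
        rintro x ⟨hxS, hx⟩
        rcases hx with h | h | h
        · exact absurd (h ▸ hxS) h0
        · exact Or.inl h
        · exact Or.inr h
    · refine hpair (HV.l 0 u) (HV.l 1 u) ?_
      rintro x ⟨hxS, hx⟩
      rcases hx with h | h | h
      · exact Or.inl h
      · exact Or.inr h
      · exact absurd (h ▸ hxS) hr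
  refine ⟨key, ?_⟩
  set T : Fin n → Set (HV n m) := fun u => S ∩ {HV.l 0 u, HV.l 1 u, HV.r1 u} with hT
  have hTfin : ∀ u, (T u).Finite := fun u =>
    Set.Finite.inter_of_right (by simp) S
  have hUnion : S ∩ (Lset n m ∪ R1set n m) = ⋃ u : Fin n, T u := by
    ext x
    simp only [Set.mem_inter_iff, Set.mem_union, Set.mem_iUnion, hT]
    constructor
    · rintro ⟨hxS, h | h⟩
      · obtain ⟨c, u, rfl⟩ := h
        refine ⟨u, hxS, ?_⟩
        fin_cases c
        · exact Or.inl rfl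
        · exact Or.inr (Or.inl rfl)
      · obtain ⟨u, rfl⟩ := h
        exact ⟨u, hxS, Or.inr (Or.inr rfl)⟩
    · rintro ⟨u, hxS, h | h | h⟩
      · exact ⟨hxS, Or.inl ⟨0, u, h⟩⟩
      · exact ⟨hxS, Or.inl ⟨1, u, h⟩⟩
      · exact ⟨hxS, Or.inr ⟨u, h⟩⟩
  rw [hUnion]
  have hfin : (⋃ u : Fin n, T u).Finite := Set.finite_iUnion hTfin
  classical
  have : (⋃ u : Fin n, T u).ncard ≤ ∑ u : Fin n, (T u).ncard := by
    rw [Set.ncard_eq_toFinset_card _ hfin]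
    have hsub : hfin.toFinset ⊆
        Finset.univ.biUnion (fun u => (hTfin u).toFinset) := by
      intro x hx
      simp only [Set.Finite.mem_toFinset, Set.mem_iUnion] at hx
      obtain ⟨u, hu⟩ := hx
      simp only [Finset.mem_biUnion, Finset.mem_univ, Set.Finite.mem_toFinset]
      exact ⟨u, trivial, hu⟩
    calc hfin.toFinset.card
        ≤ (Finset.univ.biUnion (fun u => (hTfin u).toFinset)).card :=
          Finset.card_le_card hsub
      _ ≤ ∑ u : Fin n, ((hTfin u).toFinset).card := Finset.card_biUnion_le
      _ = ∑ u : Fin n, (T u).ncard := by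
          refine Finset.sum_congr rfl fun u _ => ?_
          exact (Set.ncard_eq_toFinset_card _ (hTfin u)).symm
  refine le_trans this ?_
  calc ∑ u : Fin n, (T u).ncard ≤ ∑ _u : Fin n, 2 :=
        Finset.sum_le_sum fun u _ => key u
    _ = 2 * n := by simp [mul_comm]
end

section
/- In the hitting-set graph G constructed from an instance (U, F_1, …, F_m) with |U| = n, let S be a minimal vertex cover of G and suppose r^c_i ∉ S for some i ∈ {1,…,m} and c ∈ {1,…,n+1}. Then l^1_u ∈ S for every u ∈ F_i, and if F_i ≠ ∅ then r^{c'}_i ∉ S for every c' ∈ {1,…,n+1}. Consequently, if every F_i is nonempty and |S| > 2n + (m−1)(n+1), then R_2 ⊆ S. -/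

lemma removableVC {α : Type*} {G : SimpleGraph α} {S : Set α} (hS : IsMinVC G S)
    {v : α} (hv : v ∈ S) (h : ∀ w, G.Adj v w → w ∈ S) : False := by
  refine hS.2 (S \ {v}) (Set.sdiff_singleton_ssubset.mpr hv) ?_
  intro a b hab
  rcases hS.1 hab with ha | hb
  · by_cases hav : a = v
    · subst hav
      exact Or.inr ⟨h b hab, hab.ne'⟩
    · exact Or.inl ⟨ha, hav⟩
  · by_cases hbv : b = v
    · subst hbv
      exact Or.inl ⟨h a hab.symm, hab.ne⟩
    · exact Or.inr ⟨hb, hbv⟩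

lemma hsKey {n m : ℕ} (F : Fin m → Finset (Fin n)) {S : Set (HV n m)}
    (hS : IsMinVC (hsGraph F) S) {i : Fin m} {c : Fin (n + 1)}
    (hc : HV.r2 c i ∉ S) :
    (∀ u ∈ F i, HV.l 0 u ∈ S) ∧ ∀ c' : Fin (n + 1), HV.r2 c' i ∉ S := by
  have h1 : ∀ u ∈ F i, HV.l 0 u ∈ S := by
    intro u hu
    have hadj : (hsGraph F).Adj (HV.l 0 u) (HV.r2 c i) := by
      simp [hsGraph, SimpleGraph.fromRel_adj, hsRel, hu]
    rcases hS.1 hadj with h | h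
    · exact h
    · exact absurd h hc
  refine ⟨h1, fun c' hc' => removableVC hS hc' ?_⟩
  intro w hw
  rw [hsGraph, SimpleGraph.fromRel_adj] at hw
  obtain ⟨-, h | h⟩ := hw
  · cases w <;> simp [hsRel] at h
  · cases w with
    | l c2 u =>
        obtain ⟨hc0, hu⟩ := h
        subst hc0
        exact h1 u hu
    | r1 u => exact h.elim
    | r2 c2 j => exact h.elim

def hsF {n m : ℕ} (S : Set (HV n m)) (g : Fin n → Fin 2) (i : Fin m)
    (hall : ∀ c' : Fin (n + 1), HV.r2 c' i ∉ S) :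
    S → (Fin n × Fin 2) ⊕ (Fin (n + 1) × {j : Fin m // j ≠ i})
  | ⟨.l c u, _⟩ => .inl (u, c)
  | ⟨.r1 u, _⟩ => .inl (u, g u)
  | ⟨.r2 c j, hj⟩ => .inr (c, ⟨j, fun h => hall c (h ▸ hj)⟩)

lemma hsTriple {n m : ℕ} (F : Fin m → Finset (Fin n)) {S : Set (HV n m)}
    (hS : IsMinVC (hsGraph F) S) {u : Fin n}
    (h0 : HV.l 0 u ∈ S) (h1 : HV.l 1 u ∈ S) (hr : HV.r1 u ∈ S) : False := by
  refine removableVC hS hr ?_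
  intro w hw
  rw [hsGraph, SimpleGraph.fromRel_adj] at hw
  obtain ⟨-, h | h⟩ := hw
  · cases w <;> simp [hsRel] at h
  · cases w with
    | l c2 u' =>
        simp [hsRel] at h
        subst h
        fin_cases c2
        · exact h0
        · exact h1
    | r1 u' => exact h.elim
    | r2 c2 j => exact h.elim

/-- Let `S` be a minimal vertex cover of the hitting-set graph. If `r^c_i ∉ S`,
then `l^1_u ∈ S` for every `u ∈ F i`, and if `F i ≠ ∅` then `r^{c'}_i ∉ S` for
every `c'`. Consequently, if every `F j` is nonempty and
`|S| > 2n + (m-1)(n+1)`, then `R_2 ⊆ S`. -/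
theorem stmt12 {n m : ℕ} (F : Fin m → Finset (Fin n))
    (S : Set (HV n m)) (hS : IsMinVC (hsGraph F) S) :
    (∀ (i : Fin m) (c : Fin (n + 1)), HV.r2 c i ∉ S →
      (∀ u ∈ F i, HV.l 0 u ∈ S) ∧
      ((F i).Nonempty → ∀ c' : Fin (n + 1), HV.r2 c' i ∉ S)) ∧
    ((∀ j : Fin m, (F j).Nonempty) → S.ncard > 2 * n + (m - 1) * (n + 1) →
      R2set n m ⊆ S) := by
  classical
  have key := fun (i : Fin m) (c : Fin (n+1)) (hc : HV.r2 c i ∉ S) => hsKey F hS hc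
  refine ⟨fun i c hc => ⟨(key i c hc).1, fun _ => (key i c hc).2⟩, ?_⟩
  intro hne hcard x hx
  obtain ⟨c, i, rfl⟩ := hx
  by_contra hxS
  obtain ⟨h1, hall⟩ := key i c hxS
  -- choose a missing l-vertex for each u with r1 u ∈ S
  set g : Fin n → Fin 2 := fun u => if HV.l 0 u ∈ S then 1 else 0 with hg
  have hgu : ∀ u : Fin n, HV.r1 u ∈ S → HV.l (g u) u ∉ S := by
    intro u hu
    by_cases h0 : HV.l 0 u ∈ S
    · intro h1'
      have : g u = 1 := by simp [hg, h0]
      rw [this] at h1'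
      exact hsTriple F hS h0 h1' hu
    · have : g u = 0 := by simp [hg, h0]
      rw [this]
      exact h0
  have hf : Function.Injective (hsF S g i hall) := by
    rintro ⟨a, ha⟩ ⟨b, hb⟩ hab
    cases a <;> cases b <;> simp only [hsF,  Sum.inl.injEq, Sum.inr.injEq, Prod.mk.injEq, Subtype.mk.injEq, HV.l.injEq, HV.r1.injEq, HV.r2.injEq, reduceCtorEq] at hab ⊢
    · exact ⟨hab.2, hab.1⟩
    · obtain ⟨h1', h2'⟩ := hab
      subst h1'; subst h2'
      exact absurd ha (hgu _ hb)
    · obtain ⟨h1', h2'⟩ := hab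
      subst h1'; subst h2'
      exact absurd hb (hgu _ ha)
    · exact hab.1
    · exact ⟨hab.1, hab.2⟩
  have hle : Nat.card S ≤
      Nat.card ((Fin n × Fin 2) ⊕ (Fin (n + 1) × {j : Fin m // j ≠ i})) :=
    Nat.card_le_card_of_injective _ hf
  have hT : Nat.card ((Fin n × Fin 2) ⊕ (Fin (n + 1) × {j : Fin m // j ≠ i}))
      = n * 2 + (n + 1) * (m - 1) := by
    have hsub : Fintype.card {j : Fin m // j ≠ i} = m - 1 := by
      simp [Fintype.card_subtype_compl, Fintype.card_subtype_eq]
    simp [Nat.card_eq_fintype_card, Fintype.card_sum, Fintype.card_prod,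
      Fintype.card_fin, hsub]
  rw [hT, Nat.card_coe_set_eq] at hle
  rw [Nat.mul_comm (m - 1) (n + 1)] at hcard
  omega
end

section
/- In the hitting-set graph G constructed from an instance (U, F_1, …, F_m) with |U| = n, for every minimal vertex cover S of G there exists a minimal vertex cover S' of G with |S'| = |S|, S' ∩ R_2 = S ∩ R_2, and such that for every u ∈ U exactly one of the following holds: either l^1_u, l^2_u ∈ S' and r_u ∉ S', or r_u ∈ S' and l^1_u, l^2_u ∉ S'. -/
open Classical in
/-- The swap involution used for normalization: whenever `l^1_u` and `r_u`
both belong to `S`, it exchanges `r_u` and `l^2_u`. -/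
noncomputable def swapFn {n m : ℕ} (S : Set (HV n m)) : HV n m → HV n m
  | .l c u => if c = 1 ∧ HV.l 0 u ∈ S ∧ HV.r1 u ∈ S then .r1 u else .l c u
  | .r1 u => if HV.l 0 u ∈ S ∧ HV.r1 u ∈ S then .l 1 u else .r1 u
  | .r2 c i => .r2 c i

lemma swapFn_invol {n m : ℕ} (S : Set (HV n m)) : Function.Involutive (swapFn S) := by
  classical
  intro x
  cases x with
  | l c u =>
    by_cases h : c = 1 ∧ HV.l 0 u ∈ S ∧ HV.r1 u ∈ S
    · simp [swapFn, h, h.2, h.1]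
    · simp [swapFn, h]
  | r1 u =>
    by_cases h : HV.l 0 u ∈ S ∧ HV.r1 u ∈ S
    · simp [swapFn, h]
    · simp [swapFn, h]
  | r2 c i => simp [swapFn]

/-- Normalized membership predicate describing the normalized cover. -/
def normMem {n m : ℕ} (S : Set (HV n m)) : HV n m → Prop
  | .l c u => if c = 0 then HV.l 0 u ∈ S else (HV.l 1 u ∈ S ∨ (HV.l 0 u ∈ S ∧ HV.r1 u ∈ S))
  | .r1 u => HV.r1 u ∈ S ∧ HV.l 0 u ∉ S
  | .r2 c i => HV.r2 c i ∈ S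

lemma normMem_l0 {n m : ℕ} (S : Set (HV n m)) (u : Fin n) :
    normMem S (HV.l 0 u) ↔ HV.l 0 u ∈ S := by simp [normMem]

lemma normMem_l1 {n m : ℕ} (S : Set (HV n m)) (u : Fin n) :
    normMem S (HV.l 1 u) ↔ (HV.l 1 u ∈ S ∨ (HV.l 0 u ∈ S ∧ HV.r1 u ∈ S)) := by simp [normMem]

lemma normMem_r1 {n m : ℕ} (S : Set (HV n m)) (u : Fin n) :
    normMem S (HV.r1 u) ↔ (HV.r1 u ∈ S ∧ HV.l 0 u ∉ S) := Iff.rfl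

lemma normMem_r2 {n m : ℕ} (S : Set (HV n m)) (c : Fin (n+1)) (i : Fin m) :
    normMem S (HV.r2 c i) ↔ HV.r2 c i ∈ S := Iff.rfl

lemma isMinVC_iff {α : Type*} (G : SimpleGraph α) (S : Set α) :
    IsMinVC G S ↔ IsVC G S ∧ ∀ x ∈ S, ∃ y, G.Adj x y ∧ y ∉ S := by
  constructor
  · rintro ⟨hvc, hmin⟩
    refine ⟨hvc, fun x hx => ?_⟩
    have hns := hmin (S \ {x}) (Set.sdiff_singleton_ssubset.mpr hx)
    rw [IsVC] at hns
    push_neg at hns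
    obtain ⟨u, v, huv, hu, hv⟩ := hns
    rcases hvc huv with h | h
    · have hux : u = x := by
        by_contra hne
        exact hu ⟨h, hne⟩
      subst hux
      refine ⟨v, huv, fun hvS => hv ⟨hvS, huv.ne'⟩⟩
    · have hvx : v = x := by
        by_contra hne
        exact hv ⟨h, hne⟩
      subst hvx
      refine ⟨u, huv.symm, fun huS => hu ⟨huS, huv.ne⟩⟩
  · rintro ⟨hvc, h⟩
    refine ⟨hvc, fun T hT hTvc => ?_⟩
    obtain ⟨x, hxS, hxT⟩ := Set.exists_of_ssubset hT
    obtain ⟨y, hadj, hyS⟩ := h x hxS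
    rcases hTvc hadj with h' | h'
    · exact hxT h'
    · exact hyS (hT.subset h')

/-- For every minimal vertex cover `S` of the hitting-set graph there is a
minimal vertex cover `S'` of the same size, agreeing with `S` on `R_2`, such
that for every `u` exactly one of the following holds:
`l^1_u, l^2_u ∈ S'` and `r_u ∉ S'`, or `r_u ∈ S'` and `l^1_u, l^2_u ∉ S'`. -/
theorem stmt14 {n m : ℕ} (F : Fin m → Finset (Fin n))
    (S : Set (HV n m)) (hS : IsMinVC (hsGraph F) S) :
    ∃ S' : Set (HV n m), IsMinVC (hsGraph F) S' ∧ S'.ncard = S.ncard ∧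
      S' ∩ R2set n m = S ∩ R2set n m ∧
      ∀ u : Fin n,
        (HV.l 0 u ∈ S' ∧ HV.l 1 u ∈ S' ∧ HV.r1 u ∉ S') ∨
        (HV.r1 u ∈ S' ∧ HV.l 0 u ∉ S' ∧ HV.l 1 u ∉ S') := by
  classical
  have hVC := hS.1
  have hneed := ((isMinVC_iff _ _).mp hS).2
  -- basic adjacencies
  have adj_lr1 : ∀ (c : Fin 2) (u : Fin n), (hsGraph F).Adj (.l c u) (.r1 u) := by
    intro c u
    rw [hsGraph, SimpleGraph.fromRel_adj]
    exact ⟨by simp, Or.inl rfl⟩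
  have adj_lr2 : ∀ (u : Fin n) (c : Fin (n+1)) (i : Fin m), u ∈ F i →
      (hsGraph F).Adj (.l 0 u) (.r2 c i) := by
    intro u c i hu
    rw [hsGraph, SimpleGraph.fromRel_adj]
    exact ⟨by simp, Or.inl ⟨rfl, hu⟩⟩
  -- neighbor inversions
  have nbr_l1 : ∀ (u : Fin n) y, (hsGraph F).Adj (.l 1 u) y → y = .r1 u := by
    intro u y hy
    rw [hsGraph, SimpleGraph.fromRel_adj] at hy
    rcases hy.2 with h | h <;> cases y <;> simp_all [hsRel]
  have nbr_l0 : ∀ (u : Fin n) y, (hsGraph F).Adj (.l 0 u) y →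
      y = .r1 u ∨ ∃ c i, y = HV.r2 c i := by
    intro u y hy
    rw [hsGraph, SimpleGraph.fromRel_adj] at hy
    rcases hy.2 with h | h <;> cases y <;> simp_all [hsRel]
  have nbr_r1 : ∀ (u : Fin n) y, (hsGraph F).Adj (.r1 u) y → ∃ c, y = HV.l c u := by
    intro u y hy
    rw [hsGraph, SimpleGraph.fromRel_adj] at hy
    rcases hy.2 with h | h <;> cases y <;> simp_all [hsRel]
  have nbr_r2 : ∀ (c : Fin (n+1)) (i : Fin m) y, (hsGraph F).Adj (.r2 c i) y →
      ∃ u, y = HV.l 0 u := by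
    intro c i y hy
    rw [hsGraph, SimpleGraph.fromRel_adj] at hy
    rcases hy.2 with h | h <;> cases y <;> simp_all [hsRel]
  -- basic facts about S
  have A1 : ∀ u, HV.l 0 u ∈ S ∨ HV.r1 u ∈ S := fun u => hVC (adj_lr1 0 u)
  have A2 : ∀ u, HV.l 1 u ∈ S ∨ HV.r1 u ∈ S := fun u => hVC (adj_lr1 1 u)
  have B : ∀ u, HV.l 1 u ∈ S → HV.r1 u ∉ S := by
    intro u h1
    obtain ⟨y, hadj, hyS⟩ := hneed _ h1
    rwa [nbr_l1 u y hadj] at hyS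
  refine ⟨{x | normMem S x}, ?_, ?_, ?_, ?_⟩
  · -- minimal vertex cover
    rw [isMinVC_iff]
    constructor
    · -- vertex cover
      have cover : ∀ x y, hsRel F x y → normMem S x ∨ normMem S y := by
        intro x y hrel
        cases x with
        | l c u =>
          cases y with
          | l c' u' => exact absurd hrel (by simp [hsRel])
          | r1 u' =>
            have hu : u = u' := hrel
            subst hu
            by_cases hr : HV.r1 u ∈ S ∧ HV.l 0 u ∉ S
            · exact Or.inr ((normMem_r1 S u).mpr hr)
            · left
              rcases (by omega : c = 0 ∨ c = 1) with rfl | rfl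
              · rw [normMem_l0]
                rcases A1 u with h | h
                · exact h
                · by_contra h0
                  exact hr ⟨h, h0⟩
              · rw [normMem_l1]
                rcases A2 u with h | h
                · exact Or.inl h
                · right
                  refine ⟨?_, h⟩
                  by_contra h0
                  exact hr ⟨h, h0⟩
          | r2 c' i =>
            obtain ⟨hc, hu⟩ := hrel
            subst hc
            by_cases h0 : HV.l 0 u ∈ S
            · exact Or.inl ((normMem_l0 S u).mpr h0)
            · right
              rw [normMem_r2]
              rcases hVC (adj_lr2 u c' i hu) with h | h
              · exact absurd h h0
              · exact h
        | r1 u => exact absurd hrel (by cases y <;> simp [hsRel])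
        | r2 c i => exact absurd hrel (by cases y <;> simp [hsRel])
      intro x y hxy
      rw [hsGraph, SimpleGraph.fromRel_adj] at hxy
      rcases hxy.2 with h | h
      · exact cover x y h
      · exact (cover y x h).symm
    · -- every vertex of the normalized cover is needed
      intro x hx
      rw [Set.mem_setOf_eq] at hx
      cases x with
      | l c u =>
        rcases (by omega : c = 0 ∨ c = 1) with rfl | rfl
        · have h0 : HV.l 0 u ∈ S := (normMem_l0 S u).mp hx
          obtain ⟨y, hadj, hyS⟩ := hneed _ h0
          refine ⟨y, hadj, ?_⟩
          rw [Set.mem_setOf_eq]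
          rcases nbr_l0 u y hadj with rfl | ⟨c', i, rfl⟩
          · rw [normMem_r1]
            intro hy
            exact hyS hy.1
          · rw [normMem_r2]
            intro hy
            exact hyS hy
        · refine ⟨HV.r1 u, adj_lr1 1 u, ?_⟩
          have hx' := (normMem_l1 S u).mp hx
          rw [Set.mem_setOf_eq, normMem_r1]
          intro hy
          obtain ⟨hr, h0⟩ := hy
          rcases hx' with h | h
          · exact B u h hr
          · exact h0 h.1
      | r1 u =>
        obtain ⟨hr, h0⟩ := (normMem_r1 S u).mp hx
        refine ⟨HV.l 0 u, (adj_lr1 0 u).symm, ?_⟩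
        rw [Set.mem_setOf_eq, normMem_l0]
        exact h0
      | r2 c i =>
        have hr : HV.r2 c i ∈ S := (normMem_r2 S c i).mp hx
        obtain ⟨y, hadj, hyS⟩ := hneed _ hr
        refine ⟨y, hadj, ?_⟩
        obtain ⟨u, rfl⟩ := nbr_r2 c i y hadj
        rw [Set.mem_setOf_eq, normMem_l0]
        exact hyS
  · -- cardinality
    have key : ∀ x, normMem S x ↔ swapFn S x ∈ S := by
      intro x
      cases x with
      | l c u =>
        rcases (by omega : c = 0 ∨ c = 1) with rfl | rfl
        · rw [normMem_l0, swapFn, if_neg (fun hc => absurd hc.1 (by decide))]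
        · rw [normMem_l1, swapFn]
          by_cases h : HV.l 0 u ∈ S ∧ HV.r1 u ∈ S
          · rw [if_pos ⟨rfl, h⟩]
            constructor
            · intro _
              exact h.2
            · intro _
              exact Or.inr h
          · rw [if_neg (fun hc => h hc.2)]
            constructor
            · rintro (h1 | h1)
              · exact h1
              · exact absurd h1 h
            · exact Or.inl
      | r1 u =>
        rw [normMem_r1, swapFn]
        by_cases h : HV.l 0 u ∈ S ∧ HV.r1 u ∈ S
        · rw [if_pos h]
          constructor
          · rintro ⟨_, h0⟩
            exact absurd h.1 h0
          · intro h1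
            exact absurd h.2 (B u h1)
        · rw [if_neg h]
          constructor
          · exact fun hh => hh.1
          · intro hr
            exact ⟨hr, fun h0 => h ⟨h0, hr⟩⟩
      | r2 c i =>
        rw [normMem_r2, swapFn]
    have himg : {x | normMem S x} = swapFn S '' S := by
      ext x
      constructor
      · intro hx
        exact ⟨swapFn S x, (key x).mp hx, swapFn_invol S x⟩
      · rintro ⟨a, ha, rfl⟩
        exact (key _).mpr (by rwa [swapFn_invol S a])
    rw [himg, Set.ncard_image_of_injective S (swapFn_invol S).injective]
  · -- agreement on R2
    ext x
    simp only [Set.mem_inter_iff, Set.mem_setOf_eq, R2set]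
    constructor
    · rintro ⟨h1, c, i, rfl⟩
      exact ⟨(normMem_r2 S c i).mp h1, c, i, rfl⟩
    · rintro ⟨h1, c, i, rfl⟩
      exact ⟨(normMem_r2 S c i).mpr h1, c, i, rfl⟩
  · -- trichotomy
    intro u
    simp only [Set.mem_setOf_eq, normMem_l0, normMem_l1, normMem_r1]
    by_cases hr : HV.r1 u ∈ S
    · by_cases h0 : HV.l 0 u ∈ S
      · left
        exact ⟨h0, Or.inr ⟨h0, hr⟩, fun hy => hy.2 h0⟩
      · right
        refine ⟨⟨hr, h0⟩, h0, ?_⟩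
        rintro (h | h)
        · exact B u h hr
        · exact h0 h.1
    · left
      have h0 : HV.l 0 u ∈ S := (A1 u).resolve_right hr
      have h1 : HV.l 1 u ∈ S := (A2 u).resolve_right hr
      exact ⟨h0, Or.inl h1, fun hy => hr hy.1⟩
end

section
/- In the hitting-set graph G constructed from an instance (U, F_1, …, F_m) with |U| = n, let S be a minimal vertex cover of G such that R_2 ⊆ S and for every u ∈ U either l^1_u, l^2_u ∈ S and r_u ∉ S, or r_u ∈ S and l^1_u, l^2_u ∉ S. Then, writing q' = |{u ∈ U : r_u ∈ S}|, one has |S| = (n − q') + n + m(n+1), and {u ∈ U : r_u ∈ S} is a hitting set for (U, F_1, …, F_m) of size q'. -/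
/-- If `S` is a minimal vertex cover of the hitting-set graph with `R_2 ⊆ S`
which is normalized (for every `u`, either `l^1_u, l^2_u ∈ S` and `r_u ∉ S`, or
`r_u ∈ S` and `l^1_u, l^2_u ∉ S`), then, with `q' = |{u : r_u ∈ S}|`,
`|S| = (n - q') + n + m(n+1)` and `{u : r_u ∈ S}` is a hitting set of size `q'`. -/
theorem stmt15 {n m : ℕ} (F : Fin m → Finset (Fin n))
    (S : Set (HV n m)) (hS : IsMinVC (hsGraph F) S)
    (hR2 : R2set n m ⊆ S)
    (hnorm : ∀ u : Fin n,
      (HV.l 0 u ∈ S ∧ HV.l 1 u ∈ S ∧ HV.r1 u ∉ S) ∨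
      (HV.r1 u ∈ S ∧ HV.l 0 u ∉ S ∧ HV.l 1 u ∉ S))
    (q' : ℕ) (hq' : q' = {u : Fin n | HV.r1 u ∈ S}.ncard) :
    S.ncard = (n - q') + n + m * (n + 1) ∧
    (∀ i : Fin m, ∃ u : Fin n, u ∈ F i ∧ u ∈ {u : Fin n | HV.r1 u ∈ S}) := by
  classical
  set A : Set (Fin n) := {u : Fin n | HV.r1 u ∈ S} with hA
  constructor
  · -- cardinality
    have hSeq : S = (HV.l 0 '' Aᶜ) ∪ (HV.l 1 '' Aᶜ) ∪ (HV.r1 '' A) ∪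
        ((fun p : Fin (n+1) × Fin m => HV.r2 p.1 p.2) '' Set.univ) := by
      ext x
      cases x with
      | l c u =>
        fin_cases c
        · rcases hnorm u with ⟨h0, h1, hr⟩ | ⟨hr, h0, h1⟩
          · simp [h0, hA, hr]
          · simp [h0, h1, hA, hr]
        · rcases hnorm u with ⟨h0, h1, hr⟩ | ⟨hr, h0, h1⟩
          · simp [h1, hA, hr]
          · simp [h0, h1, hA, hr]
      | r1 u =>
        rcases hnorm u with ⟨h0, h1, hr⟩ | ⟨hr, h0, h1⟩ <;> simp [hA, hr]
      | r2 c i =>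
        have : HV.r2 c i ∈ S := hR2 ⟨c, i, rfl⟩
        simp [this]
    have inj0 : Function.Injective (HV.l 0 : Fin n → HV n m) := by
      intro a b h; injection h
    have inj1 : Function.Injective (HV.l 1 : Fin n → HV n m) := by
      intro a b h; injection h
    have injr : Function.Injective (HV.r1 : Fin n → HV n m) := by
      intro a b h; injection h
    have inj2 : Function.Injective (fun p : Fin (n+1) × Fin m => HV.r2 p.1 p.2) := by
      intro ⟨a, b⟩ ⟨a', b'⟩ h
      simp only [HV.r2.injEq] at h
      simp [Prod.ext_iff, h.1, h.2]
    have d01 : Disjoint (HV.l 0 '' Aᶜ : Set (HV n m)) (HV.l 1 '' Aᶜ) := by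
      rw [Set.disjoint_left]; rintro _ ⟨a, _, rfl⟩ ⟨b, _, hb⟩
      simp [HV.l.injEq] at hb
    have d0r : Disjoint (HV.l 0 '' Aᶜ ∪ HV.l 1 '' Aᶜ : Set (HV n m)) (HV.r1 '' A) := by
      rw [Set.disjoint_left]; rintro _ (⟨a, _, rfl⟩ | ⟨a, _, rfl⟩) ⟨b, _, hb⟩ <;>
        simp at hb
    have d2 : Disjoint (HV.l 0 '' Aᶜ ∪ HV.l 1 '' Aᶜ ∪ HV.r1 '' A : Set (HV n m))
        ((fun p : Fin (n+1) × Fin m => HV.r2 p.1 p.2) '' Set.univ) := by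
      rw [Set.disjoint_left]
      rintro _ ((⟨a, _, rfl⟩ | ⟨a, _, rfl⟩) | ⟨a, _, rfl⟩) ⟨⟨b1, b2⟩, _, hb⟩ <;>
        simp at hb
    have hq'le : q' ≤ n := by
      rw [hq']
      calc A.ncard ≤ (Set.univ : Set (Fin n)).ncard :=
            Set.ncard_le_ncard (Set.subset_univ _) (Set.toFinite _)
        _ = n := by simp [Set.ncard_univ]
    have hcompl : (Aᶜ : Set (Fin n)).ncard = n - q' := by
      have := Set.ncard_add_ncard_compl A
      simp [Set.ncard_univ] at this
      omega
    rw [hSeq, Set.ncard_union_eq d2 (by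
        exact ((Set.toFinite _).image _).union ((Set.toFinite _).image _) |>.union
          ((Set.toFinite _).image _)) ((Set.toFinite _).image _),
      Set.ncard_union_eq d0r (((Set.toFinite _).image _).union ((Set.toFinite _).image _))
        ((Set.toFinite _).image _),
      Set.ncard_union_eq d01 ((Set.toFinite _).image _) ((Set.toFinite _).image _),
      Set.ncard_image_of_injective _ inj0, Set.ncard_image_of_injective _ inj1,
      Set.ncard_image_of_injective _ injr, Set.ncard_image_of_injective _ inj2,
      hcompl, ← hq', Set.ncard_univ]
    simp [Nat.card_eq_fintype_card, Nat.mul_comm]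
    omega
  · -- hitting set
    intro i
    have hv : HV.r2 0 i ∈ S := hR2 ⟨0, i, rfl⟩
    have hT : (S \ {HV.r2 0 i}) ⊂ S := by
      constructor
      · exact Set.diff_subset
      · intro hsub
        exact (hsub hv).2 rfl
    have hnvc := hS.2 _ hT
    rw [IsVC] at hnvc
    push_neg at hnvc
    obtain ⟨a, b, hadj, ha, hb⟩ := hnvc
    have hab := hS.1 hadj
    rw [hsGraph, SimpleGraph.fromRel_adj] at hadj
    obtain ⟨hne, hrel⟩ := hadj
    -- one endpoint is the removed vertex, the other is uncovered
    have key : ∃ u : Fin n, u ∈ F i ∧ HV.l 0 u ∉ S := by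
      rcases hab with haS | hbS
      · have ha' : a = HV.r2 0 i := by
          by_contra h
          exact ha ⟨haS, h⟩
        subst ha'
        have hbS' : b ∉ S := by
          intro h
          exact hb ⟨h, fun hbe => hne hbe.symm⟩
        rcases hrel with h | h
        · cases b <;> simp [hsRel] at h
        · cases b with
          | l c u =>
            obtain ⟨hc, hu⟩ := h
            subst hc
            exact ⟨u, hu, hbS'⟩
          | r1 u => simp [hsRel] at h
          | r2 c j => simp [hsRel] at h
      · have hb' : b = HV.r2 0 i := by
          by_contra h
          exact hb ⟨hbS, h⟩
        subst hb'
        have haS' : a ∉ S := by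
          intro h
          exact ha ⟨h, fun hae => hne hae⟩
        rcases hrel with h | h
        · cases a with
          | l c u =>
            obtain ⟨hc, hu⟩ := h
            subst hc
            exact ⟨u, hu, haS'⟩
          | r1 u => simp [hsRel] at h
          | r2 c j => simp [hsRel] at h
        · cases a <;> simp [hsRel] at h
    obtain ⟨u, hu, hl⟩ := key
    rcases hnorm u with ⟨h0, _, _⟩ | ⟨hr, _, _⟩
    · exact absurd h0 hl
    · exact ⟨u, hu, hr⟩
end

section
/- Let (U, F_1, …, F_m) be a hitting-set instance with |U| = n in which every F_i is nonempty, let q be the minimum size of a hitting set, and let G be the associated hitting-set graph. Then the maximum size of a minimal vertex cover of G equals (n − q) + n + m(n+1). -/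
def hvEquiv (n m : ℕ) : HV n m ≃ (Fin 2 × Fin n) ⊕ (Fin n ⊕ (Fin (n+1) × Fin m)) where
  toFun x := match x with
    | .l c u => Sum.inl (c, u)
    | .r1 u => Sum.inr (Sum.inl u)
    | .r2 c i => Sum.inr (Sum.inr (c, i))
  invFun x := match x with
    | Sum.inl (c, u) => .l c u
    | Sum.inr (Sum.inl u) => .r1 u
    | Sum.inr (Sum.inr (c, i)) => .r2 c i
  left_inv x := by cases x <;> rfl
  right_inv x := by rcases x with ⟨c,u⟩ | u | ⟨c,i⟩ <;> rfl

noncomputable instance (n m : ℕ) : Fintype (HV n m) := Fintype.ofEquiv _ (hvEquiv n m).symm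

lemma card_HV (n m : ℕ) : Nat.card (HV n m) = 2*n + n + m*(n+1) := by
  rw [Nat.card_congr (hvEquiv n m), Nat.card_sum, Nat.card_sum, Nat.card_prod, Nat.card_prod]
  simp [Nat.card_eq_fintype_card]
  ring

lemma minVC_nbr {α : Type*} {G : SimpleGraph α} {S : Set α} (h : IsMinVC G S) {v : α}
    (hv : v ∈ S) : ∃ w, G.Adj v w ∧ w ∉ S := by
  by_contra hc
  push_neg at hc
  apply h.2 (S \ {v}) (Set.sdiff_singleton_ssubset.mpr hv)
  intro a b hab
  rcases h.1 hab with ha | hb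
  · rcases eq_or_ne a v with rfl | hne
    · right
      have hbS := hc b hab
      exact ⟨hbS, hab.ne'⟩
    · exact Or.inl ⟨ha, hne⟩
  · rcases eq_or_ne b v with rfl | hne
    · left
      have haS := hc a hab.symm
      exact ⟨haS, hab.ne⟩
    · exact Or.inr ⟨hb, hne⟩

lemma vc_min_of_nbr {α : Type*} {G : SimpleGraph α} {S : Set α} (hvc : IsVC G S)
    (h : ∀ v ∈ S, ∃ w, G.Adj v w ∧ w ∉ S) : IsMinVC G S := by
  refine ⟨hvc, fun T hT hTvc => ?_⟩
  obtain ⟨v, hvS, hvT⟩ := Set.exists_of_ssubset hT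
  obtain ⟨w, hadj, hwS⟩ := h v hvS
  rcases hTvc hadj with h1 | h2
  · exact hvT h1
  · exact hwS (hT.1 h2)

section main
variable {n m : ℕ} (F : Fin m → Finset (Fin n))

lemma adj_l_r1 (c : Fin 2) (u : Fin n) : (hsGraph F).Adj (HV.l c u) (HV.r1 u) := by
  simp [hsGraph, SimpleGraph.fromRel_adj, hsRel]

lemma adj_l0_r2 {u : Fin n} {i : Fin m} (hu : u ∈ F i) (c : Fin (n+1)) :
    (hsGraph F).Adj (HV.l 0 u) (HV.r2 c i) := by
  simp [hsGraph, SimpleGraph.fromRel_adj, hsRel, hu]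

lemma nbr_l1 {u : Fin n} {w : HV n m} (h : (hsGraph F).Adj (HV.l 1 u) w) :
    w = HV.r1 u := by
  rcases w with ⟨c,v⟩ | v | ⟨c,i⟩ <;>
    simp_all [hsGraph, SimpleGraph.fromRel_adj, hsRel]

lemma nbr_r2 {c : Fin (n+1)} {i : Fin m} {w : HV n m}
    (h : (hsGraph F).Adj (HV.r2 c i) w) : ∃ u ∈ F i, w = HV.l 0 u := by
  rcases w with ⟨c',v⟩ | v | ⟨c',i'⟩ <;>
    simp_all [hsGraph, SimpleGraph.fromRel_adj, hsRel]

end main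

/-- If every `F i` is nonempty and `q` is the minimum size of a hitting set for
`(U, F_1, …, F_m)`, then the maximum size of a minimal vertex cover of the
hitting-set graph equals `(n - q) + n + m(n+1)`. -/
theorem stmt16 {n m : ℕ} (F : Fin m → Finset (Fin n))
    (hF : ∀ i : Fin m, (F i).Nonempty)
    (q : ℕ)
    (hq : q = sInf {k : ℕ | ∃ U' : Finset (Fin n),
      (∀ i : Fin m, ∃ u ∈ U', u ∈ F i) ∧ U'.card = k}) :
    sSup {k : ℕ | ∃ S : Set (HV n m), IsMinVC (hsGraph F) S ∧ S.ncard = k} =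
      (n - q) + n + m * (n + 1) := by
  classical
  -- q ≤ n and a minimal hitting set H of card q
  have hne : {k : ℕ | ∃ U' : Finset (Fin n),
      (∀ i : Fin m, ∃ u ∈ U', u ∈ F i) ∧ U'.card = k}.Nonempty := by
    refine ⟨n, Finset.univ, fun i => ?_, by simp⟩
    obtain ⟨u, hu⟩ := hF i
    exact ⟨u, Finset.mem_univ u, hu⟩
  have hqn : q ≤ n := by
    rw [hq]
    refine Nat.sInf_le ?_
    obtain ⟨k, hk⟩ := hne
    refine ⟨Finset.univ, fun i => ?_, by simp⟩
    obtain ⟨u, hu⟩ := hF i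
    exact ⟨u, Finset.mem_univ u, hu⟩
  obtain ⟨H, hHhit, hHcard⟩ : ∃ U' : Finset (Fin n),
      (∀ i : Fin m, ∃ u ∈ U', u ∈ F i) ∧ U'.card = q := hq ▸ Nat.sInf_mem hne
  have htot := card_HV n m
  set A := {k : ℕ | ∃ S : Set (HV n m), IsMinVC (hsGraph F) S ∧ S.ncard = k} with hA
  -- ## Lower bound: a minimal vertex cover of the target size exists
  have hmem : (n - q) + n + m * (n + 1) ∈ A := by
    set I : Set (HV n m) :=
      (fun u => HV.l 0 u) '' ↑H ∪ (fun u => HV.l 1 u) '' ↑H ∪ HV.r1 '' (↑H : Set (Fin n))ᶜ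
      with hI
    refine ⟨Iᶜ, ?_, ?_⟩
    · -- minimal vertex cover
      have hvc : IsVC (hsGraph F) Iᶜ := by
        intro a b hadj
        by_contra hc
        push_neg at hc
        obtain ⟨ha, hb⟩ := hc
        rw [Set.notMem_compl_iff] at ha hb
        rcases ha with (⟨u,hu,rfl⟩|⟨u,hu,rfl⟩)|⟨u,hu,rfl⟩ <;>
          rcases hb with (⟨u',hu',rfl⟩|⟨u',hu',rfl⟩)|⟨u',hu',rfl⟩ <;>
          simp_all [hsGraph, SimpleGraph.fromRel_adj, hsRel]
      refine vc_min_of_nbr hvc ?_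
      rintro v hv
      rcases v with ⟨c,u⟩ | u | ⟨c,i⟩
      · -- v = l c u; since v ∉ I we must have u ∉ H
        have hu : u ∉ H := by
          intro hu
          apply hv
          fin_cases c
          · exact Or.inl (Or.inl ⟨u, by simpa using hu, rfl⟩)
          · exact Or.inl (Or.inr ⟨u, by simpa using hu, rfl⟩)
        exact ⟨HV.r1 u, adj_l_r1 F c u,
          fun hw => hw (Or.inr ⟨u, by simpa using hu, rfl⟩)⟩
      · have hu : u ∈ H := by
          by_contra hu
          exact hv (Or.inr ⟨u, by simpa using hu, rfl⟩)
        exact ⟨HV.l 0 u, (adj_l_r1 F 0 u).symm,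
          fun hw => hw (Or.inl (Or.inl ⟨u, by simpa using hu, rfl⟩))⟩
      · obtain ⟨u, huH, huF⟩ := hHhit i
        exact ⟨HV.l 0 u, (adj_l0_r2 F huF c).symm,
          fun hw => hw (Or.inl (Or.inl ⟨u, by simpa using huH, rfl⟩))⟩
    · -- cardinality
      have hinj0 : Function.Injective (fun u : Fin n => (HV.l 0 u : HV n m)) := by
        intro a b h; simpa using h
      have hinj1 : Function.Injective (fun u : Fin n => (HV.l 1 u : HV n m)) := by
        intro a b h; simpa using h
      have hinjr : Function.Injective (HV.r1 : Fin n → HV n m) := by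
        intro a b h; simpa using h
      have d1 : Disjoint ((fun u => (HV.l 0 u : HV n m)) '' (↑H : Set (Fin n)))
          ((fun u => (HV.l 1 u : HV n m)) '' (↑H : Set (Fin n))) := by
        rw [Set.disjoint_left]
        rintro x ⟨u,hu,rfl⟩ ⟨u',hu',h⟩
        simp only [HV.l.injEq] at h
        exact absurd h.1 (by decide)
      have d2 : Disjoint ((fun u => (HV.l 0 u : HV n m)) '' (↑H : Set (Fin n)) ∪
          (fun u => (HV.l 1 u : HV n m)) '' (↑H : Set (Fin n)))
          ((HV.r1 : Fin n → HV n m) '' (↑H : Set (Fin n))ᶜ) := by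
        rw [Set.disjoint_left]
        rintro x (⟨u,hu,rfl⟩|⟨u,hu,rfl⟩) ⟨u',hu',h⟩ <;> simp at h
      have hIcard : I.ncard = n + q := by
        rw [hI, Set.ncard_union_eq d2 (Set.toFinite _) (Set.toFinite _),
          Set.ncard_union_eq d1 (Set.toFinite _) (Set.toFinite _),
          Set.ncard_image_of_injective _ hinj0, Set.ncard_image_of_injective _ hinj1,
          Set.ncard_image_of_injective _ hinjr, Set.ncard_coe_finset, hHcard]
        have := Set.ncard_add_ncard_compl (↑H : Set (Fin n))
        rw [Set.ncard_coe_finset, hHcard, Nat.card_eq_fintype_card, Fintype.card_fin] at this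
        omega
      have := Set.ncard_add_ncard_compl I
      omega
  -- ## Upper bound
  have hub : ∀ k ∈ A, k ≤ (n - q) + n + m * (n + 1) := by
    rintro k ⟨S, hS, rfl⟩
    have hcompl := Set.ncard_add_ncard_compl S
    suffices h : n + q ≤ Sᶜ.ncard by omega
    -- the function picking, for each u, a vertex of Sᶜ among l 1 u, r1 u
    set f : Fin n → HV n m := fun u => if HV.r1 u ∈ Sᶜ then HV.r1 u else HV.l 1 u with hf
    have hfmem : ∀ u, f u ∈ Sᶜ := by
      intro u
      simp only [hf]
      by_cases h1 : HV.r1 u ∈ Sᶜ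
      · rw [if_pos h1]; exact h1
      · rw [if_neg h1]
        intro hl
        obtain ⟨w, hadj, hw⟩ := minVC_nbr hS hl
        rw [nbr_l1 F hadj] at hw
        exact h1 hw
    have hfinj : Function.Injective f := by
      intro a b hab
      simp only [hf] at hab
      by_cases h1 : HV.r1 a ∈ Sᶜ <;> by_cases h2 : HV.r1 b ∈ Sᶜ
      · rw [if_pos h1, if_pos h2] at hab; simpa using hab
      · rw [if_pos h1, if_neg h2] at hab; exact absurd hab (by simp)
      · rw [if_neg h1, if_pos h2] at hab; exact absurd hab (by simp)
      · rw [if_neg h1, if_neg h2] at hab; simpa using hab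
    have hfn : (f '' Set.univ).ncard = n := by
      rw [Set.ncard_image_of_injective _ hfinj, Set.ncard_univ, Nat.card_eq_fintype_card,
        Fintype.card_fin]
    by_cases hhit : ∀ i : Fin m, ∃ u, HV.l 0 u ∈ Sᶜ ∧ u ∈ F i
    · -- the set H' = {u | l 0 u ∈ Sᶜ} is a hitting set, so has ≥ q elements
      set H' : Set (Fin n) := {u | HV.l 0 u ∈ Sᶜ} with hH'
      have hqH : q ≤ H'.ncard := by
        rw [hq]
        refine Nat.sInf_le ⟨(Set.toFinite H').toFinset, fun i => ?_, ?_⟩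
        · obtain ⟨u, hu1, hu2⟩ := hhit i
          exact ⟨u, by simpa [Set.Finite.mem_toFinset] using hu1, hu2⟩
        · exact (Set.ncard_eq_toFinset_card _ _).symm
      have hsub : (fun u => HV.l 0 u) '' H' ∪ f '' Set.univ ⊆ Sᶜ := by
        rintro x (⟨u,hu,rfl⟩|⟨u,-,rfl⟩)
        · exact hu
        · exact hfmem u
      have hdisj : Disjoint ((fun u => HV.l 0 u) '' H') (f '' Set.univ) := by
        rw [Set.disjoint_left]
        rintro x ⟨u,hu,rfl⟩ ⟨u',-,h⟩
        simp only [hf] at h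
        by_cases h1 : HV.r1 u' ∈ Sᶜ
        · rw [if_pos h1] at h; exact absurd h (by simp)
        · rw [if_neg h1] at h
          simp only [HV.l.injEq] at h
          exact absurd h.1 (by decide)
      have hle := Set.ncard_le_ncard hsub (Set.toFinite _)
      rw [Set.ncard_union_eq hdisj (Set.toFinite _) (Set.toFinite _),
        Set.ncard_image_of_injective _ (fun a b h => by simpa using h : Function.Injective
          (fun u : Fin n => (HV.l 0 u : HV n m))), hfn] at hle
      omega
    · push_neg at hhit
      obtain ⟨i, hi⟩ := hhit
      have hr2 : ∀ c : Fin (n+1), HV.r2 c i ∈ Sᶜ := by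
        intro c hc
        obtain ⟨w, hadj, hw⟩ := minVC_nbr hS hc
        obtain ⟨u, huF, rfl⟩ := nbr_r2 F hadj
        exact hi u hw huF
      have hsub : (fun c => HV.r2 c i) '' Set.univ ∪ f '' Set.univ ⊆ Sᶜ := by
        rintro x (⟨c,-,rfl⟩|⟨u,-,rfl⟩)
        · exact hr2 c
        · exact hfmem u
      have hdisj : Disjoint ((fun c => HV.r2 c i) '' Set.univ) (f '' Set.univ) := by
        rw [Set.disjoint_left]
        rintro x ⟨c,-,rfl⟩ ⟨u',-,h⟩
        simp only [hf] at h
        by_cases h1 : HV.r1 u' ∈ Sᶜ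
        · rw [if_pos h1] at h; exact absurd h (by simp)
        · rw [if_neg h1] at h; exact absurd h (by simp)
      have hle := Set.ncard_le_ncard hsub (Set.toFinite _)
      rw [Set.ncard_union_eq hdisj (Set.toFinite _) (Set.toFinite _),
        Set.ncard_image_of_injective _ (fun a b h => by simpa using h : Function.Injective
          (fun c : Fin (n+1) => (HV.r2 c i : HV n m))), hfn, Set.ncard_univ,
        Nat.card_eq_fintype_card, Fintype.card_fin] at hle
      omega
  exact le_antisymm (csSup_le ⟨_, hmem⟩ hub) (le_csSup ⟨_, hub⟩ hmem)
end

section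
/- Let M ≥ 1 be a real number and let α be a real number with 1/(2 − 1/(7.35841·M + 1)) ≤ α < 1/(2 − 1/(M + 1)). Define x = 1 − (1 − α)/(M(2α − 1) + 1 − α). Then 0 < x < 1 and 1/(x^x · (1 − x)^{1−x}) ≥ 3^{1/3}. -/
open Real

/-!
Write `N = M (2α - 1)` and `P = 1 - α`, so that `x = N / (N + P)`. The two bounds on `α` say
exactly `P / 7.35841 ≤ N < P`, hence `x ∈ [1 / 8.35841, 1 / 2)`. Since
`1 / (x^x (1 - x)^(1 - x)) = exp (binEntropy x)` and the binary entropy increases on `[0, 1/2]`,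
it remains to check `log 3 / 3 ≤ binEntropy (1 / 8.35841)`, which holds with a margin of about
`3 · 10⁻⁶`; truncated Taylor series of `log (1 - t)` are precise enough for that.
-/

theorem log_one_sub_le_neg_sum_add {x : ℝ} (hx : |x| < 1) (n : ℕ) :
    log (1 - x) ≤ -(∑ i ∈ Finset.range n, x ^ (i + 1) / (i + 1)) + |x| ^ (n + 1) / (1 - |x|) := by
  have h := (abs_le.mp (abs_log_sub_add_sum_range_le hx n)).2
  linarith

theorem log_three_div_three_le_binEntropy : log 3 / 3 ≤ binEntropy (100000 / 835841) := by
  have hlog_a : log (100000 / 835841 : ℝ) = log (1 - 35841 / 835841) - 3 * log 2 := by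
    rw [show (100000 / 835841 : ℝ) = (1 - 35841 / 835841) / 2 ^ 3 by norm_num,
      log_div (by norm_num) (by norm_num), log_pow]
    push_cast; ring
  have h₁ : log (1 - 35841 / 835841 : ℝ) ≤ -0.0438266 := by
    refine (log_one_sub_le_neg_sum_add (by norm_num [abs_of_pos]) 5).trans ?_
    norm_num [abs_of_pos, Finset.sum_range_succ]
  have h₂ : log (1 - 100000 / 835841 : ℝ) ≤ -0.1274243 := by
    refine (log_one_sub_le_neg_sum_add (by norm_num [abs_of_pos]) 8).trans ?_
    norm_num [abs_of_pos, Finset.sum_range_succ]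
  rw [binEntropy, log_inv, log_inv, hlog_a]
  linarith [log_two_gt_d9, log_three_lt_d9]

theorem rpow_self_mul_one_sub_rpow_eq_exp_neg_binEntropy {x : ℝ} (h₀ : 0 < x) (h₁ : x < 1) :
    x ^ x * (1 - x) ^ (1 - x) = exp (-binEntropy x) := by
  rw [rpow_def_of_pos h₀, rpow_def_of_pos (sub_pos.mpr h₁), ← exp_add, binEntropy,
    log_inv, log_inv]
  ring_nf

theorem one_div_two_sub_one_div_add_one {c : ℝ} (hc : c + 1 ≠ 0) :
    1 / (2 - 1 / (c + 1)) = (c + 1) / (2 * c + 1) := by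
  rw [sub_div' hc, one_div_div]
  ring_nf

theorem one_sub_div_add_mem_Ico {N P k : ℝ} (hN : 0 < N) (hNP : N < P) (hPN : P ≤ k * N) :
    1 - P / (N + P) ∈ Set.Ico (1 / (k + 1)) (1 / 2) := by
  have hsum : 0 < N + P := by linarith
  rw [one_sub_div hsum.ne', add_sub_cancel_right]
  constructor
  · rw [div_le_div_iff₀ (by nlinarith) hsum]; linarith
  · rw [div_lt_div_iff₀ hsum two_pos]; linarith

/-- For `M ≥ 1` and `1/(2 - 1/(7.35841·M + 1)) ≤ α < 1/(2 - 1/(M + 1))`, setting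
`x = 1 - (1 - α)/(M(2α - 1) + 1 - α)`, we have `0 < x < 1` and
`1/(x^x (1-x)^{1-x}) ≥ 3^{1/3}`. -/
theorem stmt17 (M α : ℝ) (hM : 1 ≤ M)
    (hα₁ : 1 / (2 - 1 / (7.35841 * M + 1)) ≤ α)
    (hα₂ : α < 1 / (2 - 1 / (M + 1)))
    (x : ℝ) (hx : x = 1 - (1 - α) / (M * (2 * α - 1) + 1 - α)) :
    0 < x ∧ x < 1 ∧
    1 / (x ^ x * (1 - x) ^ (1 - x)) ≥ (3 : ℝ) ^ ((1 : ℝ) / 3) := by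
  rw [one_div_two_sub_one_div_add_one (by positivity), div_le_iff₀ (by positivity)] at hα₁
  rw [one_div_two_sub_one_div_add_one (by positivity), lt_div_iff₀ (by positivity)] at hα₂
  have hN : 0 < M * (2 * α - 1) := mul_pos (by positivity) (by nlinarith)
  have hx_mem : x ∈ Set.Ico (100000 / 835841) (1 / 2) := by
    have h := one_sub_div_add_mem_Ico (P := 1 - α) (k := 7.35841) hN (by linarith) (by linarith)
    rw [← add_sub_assoc, ← hx] at h
    norm_num at h ⊢
    exact h
  have hx₀ : 0 < x := lt_of_lt_of_le (by norm_num) hx_mem.1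
  have hx₁ : x < 1 := hx_mem.2.trans (by norm_num)
  have hH : log 3 / 3 ≤ binEntropy x :=
    log_three_div_three_le_binEntropy.trans <| binEntropy_strictMonoOn.monotoneOn
      ⟨by norm_num, by norm_num⟩ ⟨hx₀.le, by linarith [hx_mem.2]⟩ hx_mem.1
  refine ⟨hx₀, hx₁, ?_⟩
  rw [rpow_self_mul_one_sub_rpow_eq_exp_neg_binEntropy hx₀ hx₁, one_div, ← exp_neg, neg_neg,
    rpow_def_of_pos three_pos]
  exact exp_le_exp.mpr (by linarith)
end
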